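/- Let u₀ : ℝ → [0, M] be bounded measurable and p_t the Gaussian heat kernel. For 0 < ε < 1, define U₀^{(ε)}(x) = ε^{−1} ∫_x^{x+ε} u₀(y) dy for x ∈ εℤ. Then there is a constant C (depending on M only) such that for all t ≥ ε² and x ∈ εℤ: |(p_t * u₀)(x) − ∑_{j ∈ ℤ} p_t(jε − x)·ε·U₀^{(ε)}(jε)| ≤ C(ε/√t + ε²/t). -/

import Mathlib

noncomputable def heatKernel (t x : ℝ) : ℝ :=
  (2 * Real.pi * t) ^ (-(1:ℝ)/2) * Real.exp (-x ^ 2 / (2 * t))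

open MeasureTheory Real Set

-- |z| e^{-z²/(4t)} ≤ √(2t)
lemma aux_abs_exp (t z : ℝ) (ht : 0 < t) :
    |z| * Real.exp (-z ^ 2 / (4 * t)) ≤ Real.sqrt (2 * t) := by
  have h2t : (0:ℝ) < 2 * t := by linarith
  have hu : (0:ℝ) ≤ z ^ 2 / (4 * t) := by positivity
  have h1 : |z| = Real.sqrt (2 * t) * Real.sqrt (z ^ 2 / (2 * t)) := by
    rw [← Real.sqrt_mul h2t.le, mul_div_cancel₀ _ (ne_of_gt h2t), Real.sqrt_sq_eq_abs]
  have h2 : Real.sqrt (z ^ 2 / (2 * t)) ≤ Real.exp (z ^ 2 / (4 * t)) := by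
    have e1 : z ^ 2 / (2 * t) = 2 * (z ^ 2 / (4 * t)) := by field_simp; ring
    have e2 : Real.sqrt (2 * (z ^ 2 / (4 * t))) ≤ 1 + z ^ 2 / (4 * t) := by
      have : 2 * (z ^ 2 / (4 * t)) ≤ (1 + z ^ 2 / (4 * t)) ^ 2 := by nlinarith
      calc Real.sqrt (2 * (z ^ 2 / (4 * t))) ≤ Real.sqrt ((1 + z ^ 2 / (4 * t)) ^ 2) :=
            Real.sqrt_le_sqrt this
        _ = 1 + z ^ 2 / (4 * t) := Real.sqrt_sq (by linarith)
    calc Real.sqrt (z ^ 2 / (2 * t)) = Real.sqrt (2 * (z ^ 2 / (4 * t))) := by rw [e1]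
      _ ≤ 1 + z ^ 2 / (4 * t) := e2
      _ ≤ Real.exp (z ^ 2 / (4 * t)) := by
          have := Real.add_one_le_exp (z ^ 2 / (4 * t)); linarith
  have hexp : Real.exp (-z ^ 2 / (4 * t)) = (Real.exp (z ^ 2 / (4 * t)))⁻¹ := by
    rw [← Real.exp_neg]; ring_nf
  rw [h1, hexp]
  have hpos := Real.exp_pos (z ^ 2 / (4 * t))
  calc Real.sqrt (2 * t) * Real.sqrt (z ^ 2 / (2 * t)) * (Real.exp (z ^ 2 / (4 * t)))⁻¹
      ≤ Real.sqrt (2 * t) * Real.exp (z ^ 2 / (4 * t)) * (Real.exp (z ^ 2 / (4 * t)))⁻¹ := by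
        gcongr
    _ = Real.sqrt (2 * t) := by field_simp

-- derivative of the translated heat kernel
lemma heatKernel_hasDerivAt (t x z : ℝ) (ht : 0 < t) :
    HasDerivAt (fun y => heatKernel t (y - x))
      (-((z - x) / t) * heatKernel t (z - x)) z := by
  unfold heatKernel
  have h1 : HasDerivAt (fun y : ℝ => y - x) 1 z := (hasDerivAt_id z).sub_const x
  have h2 : HasDerivAt (fun y : ℝ => (y - x) ^ 2) (2 * (z - x)) z := by
    simpa using h1.fun_pow 2
  have h3 : HasDerivAt (fun y : ℝ => -(y - x) ^ 2 / (2 * t))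
      (-(2 * (z - x)) / (2 * t)) z := by
    simpa [neg_div] using (h2.div_const (2 * t)).fun_neg
  have h4 := (h3.exp).const_mul ((2 * Real.pi * t) ^ (-(1:ℝ)/2))
  refine h4.congr_deriv ?_
  field_simp

lemma cell_disjoint {ε : ℝ} (hε : 0 < ε) :
    Pairwise (Function.onFun Disjoint fun j : ℤ => Set.Ico ((j:ℝ) * ε) ((j:ℝ) * ε + ε)) := by
  intro m m' hmm
  have key : ∀ a b : ℤ, a < b →
      Disjoint (Set.Ico ((a:ℝ) * ε) ((a:ℝ) * ε + ε)) (Set.Ico ((b:ℝ) * ε) ((b:ℝ) * ε + ε)) := by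
    intro a b hab
    rw [Set.Ico_disjoint_Ico]
    have : (a:ℝ) * ε + ε ≤ (b:ℝ) * ε := by
      have : (a:ℝ) + 1 ≤ (b:ℝ) := by exact_mod_cast hab
      nlinarith
    exact le_trans (min_le_left _ _) (le_trans this (le_max_right _ _))
  rcases lt_or_gt_of_ne hmm with h | h
  · exact key _ _ h
  · exact (key _ _ h).symm

lemma cell_union {ε : ℝ} (hε : 0 < ε) :
    (⋃ j : ℤ, Set.Ico ((j:ℝ) * ε) ((j:ℝ) * ε + ε)) = Set.univ := by
  ext y
  simp only [Set.mem_iUnion, Set.mem_Ico, Set.mem_univ, iff_true]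
  refine ⟨⌊y / ε⌋, ?_, ?_⟩
  · have := Int.floor_le (y / ε)
    calc (⌊y / ε⌋ : ℝ) * ε ≤ (y / ε) * ε := by nlinarith
      _ = y := by field_simp
  · have := Int.lt_floor_add_one (y / ε)
    have h2 : y / ε * ε < ((⌊y / ε⌋ : ℝ) + 1) * ε := by nlinarith
    calc y = y / ε * ε := by field_simp
      _ < ((⌊y / ε⌋ : ℝ) + 1) * ε := h2
      _ = (⌊y / ε⌋ : ℝ) * ε + ε := by ring

lemma heatKernel_deriv_bound (t z : ℝ) (ht : 0 < t) :
    |(-(z / t)) * heatKernel t z| ≤ 1 / t * Real.exp (-z ^ 2 / (4 * t)) := by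
  have h2pt : (0:ℝ) < 2 * Real.pi * t := by positivity
  have hc : (2 * Real.pi * t) ^ (-(1:ℝ)/2) = (Real.sqrt (2 * Real.pi * t))⁻¹ := by
    rw [show (-(1:ℝ)/2) = -(1/2) by norm_num, Real.rpow_neg h2pt.le, ← Real.sqrt_eq_rpow]
  set c := (Real.sqrt (2 * Real.pi * t))⁻¹ with hcdef
  have hc0 : 0 ≤ c := by positivity
  have hcs : c * Real.sqrt (2 * t) ≤ 1 := by
    rw [hcdef, inv_mul_le_iff₀ (by positivity), mul_one]
    apply Real.sqrt_le_sqrt; nlinarith [Real.pi_gt_three]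
  set e4 := Real.exp (-z ^ 2 / (4 * t)) with he4
  have he40 : 0 ≤ e4 := (Real.exp_pos _).le
  have hsplit : Real.exp (-z ^ 2 / (2 * t)) = e4 * e4 := by
    rw [he4, ← Real.exp_add]; congr 1; field_simp; ring
  unfold heatKernel
  rw [hc, hsplit]
  have habs : |(-(z / t)) * (c * (e4 * e4))| = |z| / t * (c * (e4 * e4)) := by
    rw [abs_mul, abs_neg, abs_div, abs_of_pos ht,
      abs_of_nonneg (mul_nonneg hc0 (mul_nonneg he40 he40))]
  rw [habs]
  calc |z| / t * (c * (e4 * e4)) = c * (|z| * e4 * e4) / t := by ring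
    _ ≤ c * (Real.sqrt (2 * t) * e4) / t := by
        gcongr
        exact aux_abs_exp t z ht
    _ = c * Real.sqrt (2 * t) * e4 / t := by ring
    _ ≤ 1 * e4 / t := by gcongr
    _ = 1 / t * e4 := by ring

lemma heatKernel_cell_bound (t x ε a d : ℝ) (ht : 0 < t) (hε : 0 < ε) (hd : 0 ≤ d)
    (hq : ∀ w ∈ Set.Icc a (a + ε), d ^ 2 ≤ (w - x) ^ 2) :
    ∀ y ∈ Set.Icc a (a + ε),
      |heatKernel t (y - x) - heatKernel t (a - x)| ≤
        1 / t * Real.exp (-d ^ 2 / (4 * t)) * ε := by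
  intro y hy
  have hconv : Convex ℝ (Set.Icc a (a + ε)) := convex_Icc _ _
  have hder : ∀ w ∈ Set.Icc a (a + ε), HasDerivWithinAt (fun y => heatKernel t (y - x))
      (-((w - x) / t) * heatKernel t (w - x)) (Set.Icc a (a + ε)) w :=
    fun w _ => (heatKernel_hasDerivAt t x w ht).hasDerivWithinAt
  have hbound : ∀ w ∈ Set.Icc a (a + ε),
      ‖-((w - x) / t) * heatKernel t (w - x)‖ ≤ 1 / t * Real.exp (-d ^ 2 / (4 * t)) := by
    intro w hw
    rw [Real.norm_eq_abs]
    calc |(-((w - x) / t)) * heatKernel t (w - x)| ≤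
        1 / t * Real.exp (-(w - x) ^ 2 / (4 * t)) := heatKernel_deriv_bound t (w - x) ht
      _ ≤ 1 / t * Real.exp (-d ^ 2 / (4 * t)) := by
          have h1 : -(w - x) ^ 2 / (4 * t) ≤ -d ^ 2 / (4 * t) := by
            have h2 := hq w hw
            have h4t : (0:ℝ) < 4 * t := by positivity
            exact (div_le_div_iff_of_pos_right h4t).2 (by linarith)
          exact mul_le_mul_of_nonneg_left (Real.exp_le_exp.2 h1) (by positivity)
  have key := hconv.norm_image_sub_le_of_norm_hasDerivWithin_le hder hbound
    (Set.mem_Icc.2 ⟨le_refl a, by linarith⟩) hy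
  rw [Real.norm_eq_abs, Real.norm_eq_abs] at key
  have hya : |y - a| ≤ ε := by
    rcases Set.mem_Icc.1 hy with ⟨h1, h2⟩
    rw [abs_of_nonneg (by linarith)]; linarith
  calc |heatKernel t (y - x) - heatKernel t (a - x)| ≤
      1 / t * Real.exp (-d ^ 2 / (4 * t)) * |y - a| := key
    _ ≤ 1 / t * Real.exp (-d ^ 2 / (4 * t)) * ε := by gcongr

noncomputable def hkrho (ε : ℝ) (k : ℤ) : ℝ :=
  if 0 ≤ k then (k : ℝ) * ε else (-(k : ℝ) - 1) * ε

noncomputable def hkg (t ε : ℝ) (k : ℤ) : ℝ :=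
  Real.exp (-(hkrho ε k) ^ 2 / (4 * t))

lemma hkrho_nonneg {ε : ℝ} (hε : 0 < ε) (k : ℤ) : 0 ≤ hkrho ε k := by
  unfold hkrho
  split_ifs with h
  · have : (0:ℝ) ≤ (k:ℝ) := by exact_mod_cast h
    positivity
  · push_neg at h
    have hk1 : k ≤ -1 := by omega
    have : (k:ℝ) ≤ -1 := by exact_mod_cast hk1
    nlinarith

lemma hkg_le_one (t ε : ℝ) (ht : 0 < t) (k : ℤ) : hkg t ε k ≤ 1 := by
  unfold hkg
  rw [Real.exp_le_one_iff]
  have : (0:ℝ) ≤ (hkrho ε k) ^ 2 := sq_nonneg _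
  have h4t : (0:ℝ) < 4 * t := by positivity
  rw [neg_div]
  simp only [neg_nonpos]
  positivity

lemma hkH_integrable (t : ℝ) (ht : 0 < t) :
    Integrable (fun z : ℝ => Real.exp (-z ^ 2 / (4 * t))) := by
  have he : (fun z : ℝ => Real.exp (-z ^ 2 / (4 * t))) =
      fun z : ℝ => Real.exp (-(1 / (4 * t)) * z ^ 2) := by
    funext z; congr 1; field_simp
  rw [he]
  exact integrable_exp_neg_mul_sq (by positivity)

lemma hkH_integral_le (t : ℝ) (ht : 0 < t) :
    ∫ z : ℝ, Real.exp (-z ^ 2 / (4 * t)) ≤ 4 * Real.sqrt t := by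
  have he : (fun z : ℝ => Real.exp (-z ^ 2 / (4 * t))) =
      fun z : ℝ => Real.exp (-(1 / (4 * t)) * z ^ 2) := by
    funext z; congr 1; field_simp
  rw [he, integral_gaussian]
  have h1 : Real.pi / (1 / (4 * t)) = 4 * Real.pi * t := by field_simp
  rw [h1]
  calc Real.sqrt (4 * Real.pi * t) ≤ Real.sqrt (16 * t) := by
        apply Real.sqrt_le_sqrt; nlinarith [Real.pi_le_four]
    _ = 4 * Real.sqrt t := by
        rw [show (16:ℝ) * t = 4 ^ 2 * t by norm_num, Real.sqrt_mul (by positivity),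
          Real.sqrt_sq (by norm_num)]

lemma hkg_finset_sum_le (t ε : ℝ) (ht : 0 < t) (hε : 0 < ε) (F : Finset ℤ) :
    ∑ k ∈ F, hkg t ε k ≤ 2 + 4 * Real.sqrt t / ε := by
  classical
  set H : ℝ → ℝ := fun z => Real.exp (-z ^ 2 / (4 * t)) with hH
  have hHint : Integrable H := hkH_integrable t ht
  have hHnn : ∀ z, 0 ≤ H z := fun z => (Real.exp_pos _).le
  set P : ℤ → Prop := fun k => k = 0 ∨ k = -1 with hP
  set r : ℤ → ℤ := fun k => if 0 ≤ k then k - 1 else k + 1 with hr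
  set I : ℤ → Set ℝ := fun k => Set.Ico ((r k : ℝ) * ε) ((r k : ℝ) * ε + ε) with hI
  -- per-element integral bound for k not in {0, -1}
  have per : ∀ k : ℤ, ¬ P k → hkg t ε k ≤ ε⁻¹ * ∫ z in I k, H z := by
    intro k hk
    simp only [hP] at hk
    push_neg at hk
    have hpt : ∀ z ∈ I k, hkg t ε k ≤ H z := by
      intro z hz
      rw [hI] at hz
      rcases Set.mem_Ico.1 hz with ⟨hz1, hz2⟩
      unfold hkg
      rw [hH]
      apply Real.exp_le_exp.2
      have h4t : (0:ℝ) < 4 * t := by positivity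
      apply (div_le_div_iff_of_pos_right h4t).2
      apply neg_le_neg
      -- z ^ 2 ≤ hkrho ε k ^ 2
      unfold hkrho
      split_ifs with h
      · -- k ≥ 1
        have hk1 : (1:ℤ) ≤ k := lt_of_le_of_ne h (Ne.symm hk.1)
        have hrk : (r k : ℝ) = (k : ℝ) - 1 := by
          rw [hr]; simp only [if_pos h]; push_cast; ring
        rw [hrk] at hz1 hz2
        have hk1' : (1:ℝ) ≤ (k:ℝ) := by exact_mod_cast hk1
        apply sq_le_sq'
        · nlinarith
        · nlinarith
      · -- k ≤ -2
        push_neg at h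
        have hk2 : k ≤ -2 := by
          rcases lt_or_eq_of_le (Int.lt_iff_add_one_le.1 h) with h' | h'
          · omega
          · omega
        have hrk : (r k : ℝ) = (k : ℝ) + 1 := by
          rw [hr]; simp only [if_neg (not_le.2 h)]; push_cast; ring
        rw [hrk] at hz1 hz2
        have hk2' : (k:ℝ) ≤ -2 := by exact_mod_cast hk2
        apply sq_le_sq'
        · nlinarith
        · nlinarith
    have hmeas : MeasurableSet (I k) := measurableSet_Ico
    have hfin : volume (I k) ≠ ⊤ := by rw [hI]; exact (measure_Ico_lt_top).ne
    have := setIntegral_ge_of_const_le hmeas hfin hpt hHint.integrableOn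
    have hvol : (volume (I k)).toReal = ε := by
      rw [hI, Real.volume_Ico, ENNReal.toReal_ofReal (by linarith)]
      ring_nf
    rw [measureReal_def, hvol, smul_eq_mul, mul_comm] at this
    calc hkg t ε k = ε⁻¹ * (hkg t ε k * ε) := by field_simp
      _ ≤ ε⁻¹ * ∫ z in I k, H z := mul_le_mul_of_nonneg_left this (by positivity)
  have hinj : ∀ k k' : ℤ, ¬ P k → ¬ P k' → k ≠ k' → r k ≠ r k' := by
    intro k k' hk hk' hne
    simp only [hP] at hk hk'
    push_neg at hk hk'
    rw [hr]; simp only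
    split_ifs with h1 h2 h2 <;> omega
  have hsplit := Finset.sum_filter_add_sum_filter_not F P (hkg t ε)
  have h1 : ∑ k ∈ F.filter P, hkg t ε k ≤ 2 := by
    have hsub : F.filter P ⊆ ({0, -1} : Finset ℤ) := by
      intro k hkm
      rcases Finset.mem_filter.1 hkm with ⟨_, hPk⟩
      simp only [hP] at hPk
      simpa [Finset.mem_insert, Finset.mem_singleton] using hPk
    have hcard : ((F.filter P).card : ℝ) ≤ 2 := by
      have := Finset.card_le_card hsub
      have h2 : ({0, -1} : Finset ℤ).card = 2 := rfl
      rw [h2] at this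
      exact_mod_cast this
    calc ∑ k ∈ F.filter P, hkg t ε k ≤ ∑ _k ∈ F.filter P, (1:ℝ) :=
          Finset.sum_le_sum (fun k _ => hkg_le_one t ε ht k)
      _ = ((F.filter P).card : ℝ) := by simp
      _ ≤ 2 := hcard
  have h2 : ∑ k ∈ F.filter (fun k => ¬ P k), hkg t ε k ≤ 4 * Real.sqrt t / ε := by
    set F' := F.filter (fun k => ¬ P k) with hF'
    have hmemP : ∀ k ∈ F', ¬ P k := fun k hkm => (Finset.mem_filter.1 hkm).2
    have hstep : ∑ k ∈ F', hkg t ε k ≤ ∑ k ∈ F', ε⁻¹ * ∫ z in I k, H z :=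
      Finset.sum_le_sum (fun k hkm => per k (hmemP k hkm))
    have hpw : Set.Pairwise (↑F') (Function.onFun Disjoint I) := by
      intro k hkm k' hkm' hne
      have hrr := hinj k k' (hmemP k (Finset.mem_coe.1 hkm)) (hmemP k' (Finset.mem_coe.1 hkm')) hne
      exact cell_disjoint hε hrr
    have hbi : ∑ k ∈ F', ∫ z in I k, H z = ∫ z in ⋃ k ∈ F', I k, H z :=
      (integral_biUnion_finset F' (fun k _ => measurableSet_Ico) hpw
        (fun k _ => hHint.integrableOn)).symm
    have hle : ∫ z in ⋃ k ∈ F', I k, H z ≤ ∫ z, H z :=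
      setIntegral_le_integral hHint (Filter.Eventually.of_forall hHnn)
    have hval : ∫ z, H z ≤ 4 * Real.sqrt t := hkH_integral_le t ht
    calc ∑ k ∈ F', hkg t ε k ≤ ∑ k ∈ F', ε⁻¹ * ∫ z in I k, H z := hstep
      _ = ε⁻¹ * ∑ k ∈ F', ∫ z in I k, H z := by rw [Finset.mul_sum]
      _ = ε⁻¹ * ∫ z in ⋃ k ∈ F', I k, H z := by rw [hbi]
      _ ≤ ε⁻¹ * (4 * Real.sqrt t) := by
          apply mul_le_mul_of_nonneg_left (hle.trans hval) (by positivity)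
      _ = 4 * Real.sqrt t / ε := by ring
  calc ∑ k ∈ F, hkg t ε k
      = ∑ k ∈ F.filter P, hkg t ε k + ∑ k ∈ F.filter (fun k => ¬ P k), hkg t ε k :=
        hsplit.symm
    _ ≤ 2 + 4 * Real.sqrt t / ε := add_le_add h1 h2

theorem heatKernel_convolution_riemann_sum_bound (M : ℝ) (hM : 0 < M) :
    ∃ C > (0:ℝ), ∀ u₀ : ℝ → ℝ, Measurable u₀ → (∀ y, 0 ≤ u₀ y ∧ u₀ y ≤ M) →
      ∀ ε : ℝ, 0 < ε → ε < 1 → ∀ t : ℝ, ε ^ 2 ≤ t → ∀ j₀ : ℤ,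
      |(∫ y : ℝ, heatKernel t (y - ε * (j₀ : ℝ)) * u₀ y) -
          ∑' j : ℤ, heatKernel t ((j : ℝ) * ε - ε * (j₀ : ℝ)) * ε *
            (ε⁻¹ * ∫ y in ((j : ℝ) * ε)..((j : ℝ) * ε + ε), u₀ y)| ≤
        C * (ε / Real.sqrt t + ε ^ 2 / t) := by
  refine ⟨4 * M, by positivity, ?_⟩
  intro u₀ hu₀m hu₀b ε hε hε1 t htε j₀
  have ht : 0 < t := lt_of_lt_of_le (by positivity) htε
  have hst : 0 < Real.sqrt t := Real.sqrt_pos.2 ht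
  set x : ℝ := ε * (j₀ : ℝ) with hx
  set f : ℝ → ℝ := fun z => heatKernel t (z - x) with hf
  set s : ℤ → Set ℝ := fun j => Set.Ico ((j:ℝ) * ε) ((j:ℝ) * ε + ε) with hs
  -- integrability of the kernel
  have hfker : Integrable f := by
    have h2 : Integrable (fun z : ℝ => Real.exp (-(1/(2*t)) * (z - x) ^ 2)) :=
      (integrable_exp_neg_mul_sq (by positivity)).comp_sub_right x
    have h3 := h2.const_mul ((2 * Real.pi * t) ^ (-(1:ℝ)/2))
    apply h3.congr
    apply Filter.Eventually.of_forall
    intro z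
    rw [hf]
    simp only [heatKernel]
    have : -(1/(2*t)) * (z - x) ^ 2 = -(z - x) ^ 2 / (2*t) := by ring
    rw [this]
  have hubdd : ∀ y, ‖u₀ y‖ ≤ M := fun y => by
    rw [Real.norm_eq_abs, abs_of_nonneg (hu₀b y).1]; exact (hu₀b y).2
  have hFint : Integrable (fun y => f y * u₀ y) := by
    have := hfker.bdd_mul hu₀m.aestronglyMeasurable (Filter.Eventually.of_forall hubdd)
    simpa [mul_comm] using this
  -- the integral as a sum over cells
  set A : ℤ → ℝ := fun j => ∫ y in s j, f y * u₀ y with hA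
  set B : ℤ → ℝ := fun j => f ((j:ℝ) * ε) * ∫ y in s j, u₀ y with hB
  have hAsum : HasSum A (∫ y, f y * u₀ y) := by
    have := hasSum_integral_iUnion (μ := volume) (s := s)
      (fun j => measurableSet_Ico) (cell_disjoint hε)
      (by rw [hs, cell_union hε]; exact hFint.integrableOn)
    rwa [hs, cell_union hε, Measure.restrict_univ] at this
  -- u₀ integrable on cells
  have hu₀int : ∀ j : ℤ, IntegrableOn u₀ (s j) := by
    intro j
    exact Integrable.mono' (integrableOn_const measure_Ico_lt_top.ne)
      hu₀m.aestronglyMeasurable.restrict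
      (Filter.Eventually.of_forall hubdd)
  -- statement terms = B j
  have hterm : ∀ j : ℤ, heatKernel t ((j:ℝ) * ε - ε * (j₀:ℝ)) * ε *
      (ε⁻¹ * ∫ y in ((j:ℝ)*ε)..((j:ℝ)*ε+ε), u₀ y) = B j := by
    intro j
    have h1 : ∫ y in ((j:ℝ)*ε)..((j:ℝ)*ε+ε), u₀ y = ∫ y in s j, u₀ y := by
      rw [intervalIntegral.integral_of_le (by linarith), integral_Ioc_eq_integral_Ioo, hs]
      exact (integral_Ico_eq_integral_Ioo).symm
    rw [h1, hB, hf]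
    have h2 : ε * (ε⁻¹ * ∫ y in s j, u₀ y) = ∫ y in s j, u₀ y := by
      field_simp
    calc heatKernel t ((j:ℝ) * ε - ε * (j₀:ℝ)) * ε * (ε⁻¹ * ∫ y in s j, u₀ y)
        = heatKernel t ((j:ℝ) * ε - ε * (j₀:ℝ)) * (ε * (ε⁻¹ * ∫ y in s j, u₀ y)) := by ring
      _ = heatKernel t ((j:ℝ) * ε - x) * ∫ y in s j, u₀ y := by rw [h2, hx]
  -- per-cell bound
  set G : ℤ → ℝ := fun j => hkg t ε (j - j₀) with hG
  set D : ℝ := M * ε ^ 2 / t with hD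
  have hGnn : ∀ j, 0 ≤ G j := fun j => (Real.exp_pos _).le
  have hv : ∀ j : ℤ, |A j - B j| ≤ D * G j := by
    intro j
    have hBint : B j = ∫ y in s j, f ((j:ℝ)*ε) * u₀ y := by
      show f ((j:ℝ)*ε) * ∫ y in s j, u₀ y = _
      exact (integral_const_mul _ _).symm
    have hsub : A j - B j = ∫ y in s j, (f y - f ((j:ℝ)*ε)) * u₀ y := by
      rw [hA, hBint, ← integral_sub hFint.integrableOn ((hu₀int j).const_mul _)]
      simp only [sub_mul]
    -- geometric bound on the cell
    have hq : ∀ w ∈ Set.Icc ((j:ℝ)*ε) ((j:ℝ)*ε + ε),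
        (hkrho ε (j - j₀)) ^ 2 ≤ (w - x) ^ 2 := by
      intro w hw
      rcases Set.mem_Icc.1 hw with ⟨hw1, hw2⟩
      have hcast : ((j - j₀ : ℤ) : ℝ) = (j:ℝ) - (j₀:ℝ) := by push_cast; ring
      unfold hkrho
      split_ifs with h
      · have hk0 : (0:ℝ) ≤ ((j - j₀ : ℤ) : ℝ) := by exact_mod_cast h
        have h1 : ((j - j₀ : ℤ):ℝ) * ε ≤ w - x := by
          rw [hcast] at *
          rw [hx]; nlinarith
        have h0 : 0 ≤ ((j - j₀ : ℤ):ℝ) * ε := by positivity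
        exact pow_le_pow_left₀ h0 h1 2
      · push_neg at h
        have hk1 : ((j - j₀ : ℤ):ℝ) + 1 ≤ 0 := by
          have : j - j₀ + 1 ≤ 0 := by omega
          exact_mod_cast this
        have h1 : w - x ≤ (((j - j₀ : ℤ):ℝ) + 1) * ε := by
          rw [hcast] at *
          rw [hx]; nlinarith
        have hb : (((j - j₀ : ℤ):ℝ) + 1) * ε ≤ 0 :=
          mul_nonpos_of_nonpos_of_nonneg hk1 hε.le
        have ha : w - x ≤ 0 := h1.trans hb
        have key : ((((j - j₀ : ℤ):ℝ) + 1) * ε) ^ 2 ≤ (w - x) ^ 2 := by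
          nlinarith [mul_nonneg (sub_nonneg.2 h1)
            (by linarith : (0:ℝ) ≤ -((w - x) + (((j - j₀ : ℤ):ℝ) + 1) * ε))]
        have heq : ((-((j - j₀ : ℤ):ℝ) - 1) * ε) ^ 2 = ((((j - j₀ : ℤ):ℝ) + 1) * ε) ^ 2 := by
          ring
        rw [heq]; exact key
    have hcell := heatKernel_cell_bound t x ε ((j:ℝ)*ε) (hkrho ε (j - j₀)) ht hε
      (hkrho_nonneg hε _) hq
    have hpt : ∀ y ∈ s j, ‖(f y - f ((j:ℝ)*ε)) * u₀ y‖ ≤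
        (1 / t * Real.exp (-(hkrho ε (j - j₀)) ^ 2 / (4 * t)) * ε) * M := by
      intro y hy
      have hy' : y ∈ Set.Icc ((j:ℝ)*ε) ((j:ℝ)*ε + ε) := Set.Ico_subset_Icc_self hy
      rw [Real.norm_eq_abs, abs_mul]
      have h1 : |f y - f ((j:ℝ)*ε)| ≤ 1 / t * Real.exp (-(hkrho ε (j - j₀)) ^ 2 / (4 * t)) * ε := by
        have := hcell y hy'
        simpa [hf] using this
      exact mul_le_mul h1 (hubdd y) (abs_nonneg _) (by positivity)
    have hnorm := norm_setIntegral_le_of_norm_le_const (μ := volume) (s := s j)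
      measure_Ico_lt_top hpt
    have hvol : (volume (s j)).toReal = ε := by
      rw [hs]
      simp only [Real.volume_Ico]
      rw [ENNReal.toReal_ofReal (by linarith)]
      ring
    rw [measureReal_def, hvol, Real.norm_eq_abs] at hnorm
    rw [hsub]
    calc |∫ y in s j, (f y - f ((j:ℝ)*ε)) * u₀ y| ≤
        (1 / t * Real.exp (-(hkrho ε (j - j₀)) ^ 2 / (4 * t)) * ε) * M * ε := hnorm
      _ = D * G j := by rw [hD, hG]; unfold hkg; ring
  -- summability
  have hgsummable : Summable (hkg t ε) :=
    summable_of_sum_le (fun k => (Real.exp_pos _).le) (hkg_finset_sum_le t ε ht hε)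
  have hGsum : Summable G := by
    have : G = (hkg t ε) ∘ (Equiv.subRight j₀) := rfl
    rw [this]
    exact (Equiv.subRight j₀).summable_iff.2 hgsummable
  have hGtsum : ∑' j, G j ≤ 2 + 4 * Real.sqrt t / ε := by
    have he : ∑' j, G j = ∑' k, hkg t ε k := (Equiv.subRight j₀).tsum_eq (hkg t ε)
    rw [he]
    exact Summable.tsum_le_of_sum_le hgsummable (hkg_finset_sum_le t ε ht hε)
  have hvsum : Summable (fun j => A j - B j) :=
    Summable.of_norm_bounded (hGsum.mul_left D)
      (fun j => by rw [Real.norm_eq_abs]; exact hv j)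
  have hAsum' : Summable A := hAsum.summable
  have hBsum : Summable B := by
    have := hAsum'.sub hvsum
    simpa using this
  -- assemble
  have hIs : (∫ y : ℝ, heatKernel t (y - ε * (j₀:ℝ)) * u₀ y) = ∑' j, A j := by
    rw [← hAsum.tsum_eq]
  have hSs : (∑' j : ℤ, heatKernel t ((j:ℝ) * ε - ε * (j₀:ℝ)) * ε *
      (ε⁻¹ * ∫ y in ((j:ℝ)*ε)..((j:ℝ)*ε+ε), u₀ y)) = ∑' j, B j := tsum_congr hterm
  rw [hIs, hSs, ← Summable.tsum_sub hAsum' hBsum]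
  have habs : |∑' j, (A j - B j)| ≤ ∑' j, |A j - B j| := by
    have := norm_tsum_le_tsum_norm (f := fun j => A j - B j)
      (by simpa [Real.norm_eq_abs] using hvsum.abs)
    simpa [Real.norm_eq_abs] using this
  have hD0 : 0 ≤ D := by rw [hD]; positivity
  have h1 : Real.sqrt t * Real.sqrt t = t := Real.mul_self_sqrt ht.le
  calc |∑' j, (A j - B j)| ≤ ∑' j, |A j - B j| := habs
    _ ≤ ∑' j, D * G j := Summable.tsum_le_tsum hv (by simpa [Real.norm_eq_abs] using hvsum.abs)
        (hGsum.mul_left D)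
    _ = D * ∑' j, G j := tsum_mul_left
    _ ≤ D * (2 + 4 * Real.sqrt t / ε) := by
        apply mul_le_mul_of_nonneg_left hGtsum hD0
    _ ≤ 4 * M * (ε / Real.sqrt t + ε ^ 2 / t) := by
        have hε' : ε ≠ 0 := ne_of_gt hε
        have hst' : Real.sqrt t ≠ 0 := ne_of_gt hst
        have ht' : t ≠ 0 := ne_of_gt ht
        have e1 : D * (2 + 4 * Real.sqrt t / ε) =
            2 * M * (ε ^ 2 / t) + 4 * M * (ε * Real.sqrt t / t) := by
          rw [hD]; field_simp
        have e2 : ε * Real.sqrt t / t = ε / Real.sqrt t := by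
          rw [div_eq_div_iff ht' hst', mul_assoc, h1]
        rw [e1, e2]
        have h3 : 0 ≤ M * (ε ^ 2 / t) := by positivity
        nlinarith [h3]
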